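/- Let P be a broadcast protocol and let ρ = (G_i)_{0 ≤ i ≤ n} be an execution of the reconfigurable broadcast network defined by P, and let N₀ be the number of nodes of G_0. Then there exists an execution ρ' = (G'_j)_{0 ≤ j ≤ m} starting from the same configuration G_0 such that: every reconfiguration step of ρ' satisfies d(G'_j, G'_{j+1}) ≤ N₀; the last step of ρ' (if ρ' has at least one step) is a communication step; and for every state q ∈ Q, the number of nodes labelled q in the last configuration G'_m equals the number of nodes labelled q in G_n. -/

import Mathlib

/-!
Reconfigurable broadcast networks (Maubert–Pinchinat–Schlehuber-Caissier style
formalization of "Reconfiguration and message losses in parameterized broadcast networks").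

A broadcast protocol is a tuple (Q, I, Σ, Δ); configurations are finite
Q-labelled simple graphs; steps are reconfiguration steps (labels unchanged,
edges arbitrary) or communication steps (edges unchanged, one node broadcasts,
its neighbours receive); executions strictly alternate the two kinds of steps.
-/

namespace RBN

/-- An action of a broadcast protocol: broadcast `!!m` or reception `??m`. -/
inductive BAct (M : Type) where
  | brd : M → BAct M
  | rcv : M → BAct M

/-- A broadcast protocol `(Q, I, Σ, Δ)` with state space `Q` and message alphabet `M`:
initial states `init ⊆ Q` and transition relation `trans ⊆ Q × BAct M × Q`. -/
structure BroadcastProtocol (Q M : Type) where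
  init : Set Q
  trans : Q → BAct M → Q → Prop

/-- A configuration: an undirected graph without self-loops on node set `V`,
whose nodes are labelled by states in `Q`. -/
structure Config (V Q : Type) where
  graph : SimpleGraph V
  label : V → Q

/-- The distance `d(G, G')` between two configurations on the same node set with
the same labelling: the number of edges in the symmetric difference of the edge sets. -/
noncomputable def dist {V Q : Type} (G G' : Config V Q) : ℕ :=
  (symmDiff G.graph.edgeSet G'.graph.edgeSet).ncard

/-- The number of edges incident to node `v` in the symmetric difference of
the edge sets of `G` and `G'`. -/
noncomputable def localDist {V Q : Type} (v : V) (G G' : Config V Q) : ℕ :=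
  {e ∈ symmDiff G.graph.edgeSet G'.graph.edgeSet | v ∈ e}.ncard

/-- A reconfiguration step: labels are unchanged and edges may change arbitrarily. -/
def ReconfStep {V Q : Type} (G G' : Config V Q) : Prop :=
  G'.label = G.label

/-- A communication step: edges are unchanged, some node `v` broadcasts a message `m`
(performing a transition `(L v, !!m, L' v) ∈ Δ`), every neighbour `u` of `v` receives it
(performing `(L u, ??m, L' u) ∈ Δ`), and every other node keeps its label. -/
def CommStep {V Q M : Type} (P : BroadcastProtocol Q M) (G G' : Config V Q) : Prop :=
  G'.graph = G.graph ∧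
  ∃ (v : V) (m : M),
    P.trans (G.label v) (.brd m) (G'.label v) ∧
    (∀ u, G.graph.Adj v u → P.trans (G.label u) (.rcv m) (G'.label u)) ∧
    (∀ u, u ≠ v → ¬ G.graph.Adj v u → G'.label u = G.label u)

/-- The type of a step: communication or reconfiguration. -/
inductive StepType where
  | comm : StepType
  | reconf : StepType
deriving DecidableEq

/-- An execution of length `r` of the reconfigurable broadcast network defined by `P`,
with node set `V`: a sequence of configurations `cfg 0, …, cfg r` together with a
classification `ty` of each step, such that each step is of its declared kind and
communication and reconfiguration steps strictly alternate (reconfiguration steps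
may be trivial). -/
structure Execution {Q M : Type} (V : Type) (P : BroadcastProtocol Q M) (r : ℕ) where
  cfg : ℕ → Config V Q
  ty : ℕ → StepType
  step_comm : ∀ i < r, ty i = .comm → CommStep P (cfg i) (cfg (i + 1))
  step_reconf : ∀ i < r, ty i = .reconf → ReconfStep (cfg i) (cfg (i + 1))
  alternate : ∀ i, i + 1 < r → ty (i + 1) ≠ ty i

variable {Q M V : Type} {P : BroadcastProtocol Q M} {r : ℕ}

/-- An execution is initial if every node of its first configuration is labelled
by an initial state. -/
def Execution.Initial (ρ : Execution V P r) : Prop :=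
  ∀ v, (ρ.cfg 0).label v ∈ P.init

/-- An execution synchronizes in `F` if every node of its last configuration is
labelled by a state in `F`. -/
def Execution.Synchronizes (ρ : Execution V P r) (F : Set Q) : Prop :=
  ∀ v, (ρ.cfg r).label v ∈ F

/-- An execution is `k`-constrained if every reconfiguration step changes at most
`k` edges. -/
def Execution.KConstrained (k : ℕ) (ρ : Execution V P r) : Prop :=
  ∀ i < r, ρ.ty i = .reconf → dist (ρ.cfg i) (ρ.cfg (i + 1)) ≤ k

/-- An execution is strongly `k`-constrained if every reconfiguration step changes
exactly `k` edges. -/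
def Execution.StronglyKConstrained (k : ℕ) (ρ : Execution V P r) : Prop :=
  ∀ i < r, ρ.ty i = .reconf → dist (ρ.cfg i) (ρ.cfg (i + 1)) = k

/-- An execution is `k`-locally-constrained if, at every step and for every node `v`,
at most `k` edges incident to `v` belong to the symmetric difference of the edge sets. -/
def Execution.LocallyConstrained (k : ℕ) (ρ : Execution V P r) : Prop :=
  ∀ (v : V), ∀ i < r, localDist v (ρ.cfg i) (ρ.cfg (i + 1)) ≤ k

/-- An execution is `f`-constrained if every reconfiguration step changes at most
`f n` edges, where `n` is the number of nodes. -/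
def Execution.FConstrained [Fintype V] (f : ℕ → ℕ) (ρ : Execution V P r) : Prop :=
  ∀ i < r, ρ.ty i = .reconf → dist (ρ.cfg i) (ρ.cfg (i + 1)) ≤ f (Fintype.card V)

/-- The number of communication steps of an execution. -/
def Execution.nbcomm (ρ : Execution V P r) : ℕ :=
  ((Finset.range r).filter (fun i => ρ.ty i = StepType.comm)).card

/-- The total number of edge reconfigurations along an execution. -/
noncomputable def Execution.nbreconfig (ρ : Execution V P r) : ℕ :=
  ∑ i ∈ (Finset.range r).filter (fun i => ρ.ty i = StepType.reconf),
    dist (ρ.cfg i) (ρ.cfg (i + 1))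

/-- An execution is `k`-balanced if it starts and ends with a communication step
and `nbreconfig ρ ≤ k * (nbcomm ρ - 1)`. -/
def Execution.Balanced (k : ℕ) (ρ : Execution V P r) : Prop :=
  1 ≤ r ∧ ρ.ty 0 = StepType.comm ∧ ρ.ty (r - 1) = StepType.comm ∧
    ρ.nbreconfig ≤ k * (ρ.nbcomm - 1)

/-- Juxtaposition `G ⊕ H` of two configurations: disjoint union. -/
def Config.juxt {V W Q : Type} (G : Config V Q) (H : Config W Q) : Config (V ⊕ W) Q where
  graph := SimpleGraph.fromEdgeSet
    (Sym2.map Sum.inl '' G.graph.edgeSet ∪ Sym2.map Sum.inr '' H.graph.edgeSet)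
  label := Sum.elim G.label H.label

/-- `G ^ N`: juxtaposition of `N` disjoint copies of `G`. -/
def Config.pow {V Q : Type} (G : Config V Q) (N : ℕ) : Config (V × Fin N) Q where
  graph := SimpleGraph.fromEdgeSet
    (⋃ i : Fin N, Sym2.map (fun v => (v, i)) '' G.graph.edgeSet)
  label := fun p => G.label p.1

/-- Renaming the nodes of a configuration along a bijection. -/
def Config.rename {V W Q : Type} (e : V ≃ W) (G : Config V Q) : Config W Q where
  graph := SimpleGraph.comap e.symm G.graph
  label := G.label ∘ e.symm


/-!
Replay the original execution step by step. A reconfiguration step changes no label and can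
be skipped. A communication step only depends on the broadcaster's neighbourhood, so it can
be replayed after a single reconfiguration that rewires the edges at the broadcaster `v` to
its neighbourhood in the original execution; that reconfiguration only touches edges
containing `v`, hence at most `|V|` of them. The replayed execution even ends with the same
labelling as the original one.
-/

def rewire (G H : SimpleGraph V) (v : V) : SimpleGraph V where
  Adj a b := (a = v ∨ b = v) ∧ H.Adj a b ∨ (a ≠ v ∧ b ≠ v) ∧ G.Adj a b
  symm := ⟨fun _ _ h => h.imp (fun h => ⟨h.1.symm, h.2.symm⟩) fun h => ⟨h.1.symm, h.2.symm⟩⟩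
  loopless := ⟨fun _ h => h.elim (fun h => H.irrefl h.2) fun h => G.irrefl h.2⟩

lemma rewire_adj_left (G H : SimpleGraph V) (v u : V) : (rewire G H v).Adj v u ↔ H.Adj v u := by
  simp [rewire]

lemma mem_of_mem_symmDiff_edgeSet_rewire {G H : SimpleGraph V} {v : V} {e : Sym2 V}
    (he : e ∈ symmDiff G.edgeSet (rewire G H v).edgeSet) : v ∈ e := by
  induction e using Sym2.ind with
  | _ a b =>
    by_contra hv
    have ha : a ≠ v := fun h => hv (h ▸ Sym2.mem_mk_left _ _)
    have hb : b ≠ v := fun h => hv (h ▸ Sym2.mem_mk_right _ _)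
    simp [Set.mem_symmDiff, rewire, ha, hb] at he

lemma ncard_le_card_of_forall_mem [Finite V] {s : Set (Sym2 V)} (v : V) (hs : ∀ e ∈ s, v ∈ e) :
    s.ncard ≤ Nat.card V := by
  have hinj : Function.Injective (fun u : V => s(v, u)) := fun _ _ h => Sym2.congr_right.mp h
  calc s.ncard ≤ (Set.range fun u => s(v, u)).ncard :=
        Set.ncard_le_ncard (fun e he => ⟨Sym2.Mem.other (hs e he), Sym2.other_spec _⟩)
          (Set.toFinite _)
    _ = Nat.card V := Set.ncard_range_of_injective hinj

lemma dist_rewire_le [Finite V] (G : Config V Q) (H : SimpleGraph V) (v : V) (L : V → Q) :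
    dist G ⟨rewire G.graph H v, L⟩ ≤ Nat.card V :=
  ncard_le_card_of_forall_mem v fun _ => mem_of_mem_symmDiff_edgeSet_rewire

lemma CommStep.exists_forall_neighborSet_eq {G G' : Config V Q} (h : CommStep P G G') :
    ∃ v, ∀ H : SimpleGraph V, H.neighborSet v = G.graph.neighborSet v →
      CommStep P ⟨H, G.label⟩ ⟨H, G'.label⟩ := by
  obtain ⟨-, v, m, hbrd, hrcv, hkeep⟩ := h
  refine ⟨v, fun H hH => ⟨rfl, v, m, hbrd, fun u hu => hrcv u ?_, fun u hu hnu => hkeep u hu ?_⟩⟩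
  · rwa [← SimpleGraph.mem_neighborSet, ← hH]
  · rwa [← SimpleGraph.mem_neighborSet, ← hH]

namespace Execution

def EndsInComm (ρ : Execution V P r) : Prop :=
  1 ≤ r → ρ.ty (r - 1) = .comm

def truncate (ρ : Execution V P r) {k : ℕ} (hk : k ≤ r) : Execution V P k where
  cfg := ρ.cfg
  ty := ρ.ty
  step_comm i hi := ρ.step_comm i (by omega)
  step_reconf i hi := ρ.step_reconf i (by omega)
  alternate i hi := ρ.alternate i (by omega)

@[simp]
lemma truncate_cfg (ρ : Execution V P r) {k : ℕ} (hk : k ≤ r) : (ρ.truncate hk).cfg = ρ.cfg :=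
  rfl

def appendReconfComm (ρ : Execution V P r) (hρ : ρ.EndsInComm) {G G' : Config V Q}
    (hG : ReconfStep (ρ.cfg r) G) (hG' : CommStep P G G') : Execution V P (r + 2) where
  cfg i := if i ≤ r then ρ.cfg i else if i = r + 1 then G else G'
  ty i := if i < r then ρ.ty i else if i = r then .reconf else .comm
  step_comm i hi hc := by
    obtain hi | rfl | rfl : i < r ∨ i = r ∨ i = r + 1 := by omega
    · simp only [hi, hi.le, Nat.succ_le_of_lt hi, if_true] at hc ⊢
      exact ρ.step_comm i hi hc
    · simp at hc
    · simpa using hG'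
  step_reconf i hi hc := by
    obtain hi | rfl | rfl : i < r ∨ i = r ∨ i = r + 1 := by omega
    · simp only [hi, hi.le, Nat.succ_le_of_lt hi, if_true] at hc ⊢
      exact ρ.step_reconf i hi hc
    · simpa using hG
    · simp at hc
  alternate i hi := by
    obtain hi | rfl | rfl : i + 1 < r ∨ i + 1 = r ∨ i = r := by omega
    · simp only [hi, (Nat.lt_succ_self i).trans hi, if_true]
      exact ρ.alternate i hi
    · simp [show ρ.ty i = .comm from hρ (Nat.le_add_left 1 i)]
    · simp

section appendReconfComm

variable {ρ : Execution V P r} {hρ : ρ.EndsInComm} {G G' : Config V Q}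
  {hG : ReconfStep (ρ.cfg r) G} {hG' : CommStep P G G'}

@[simp]
lemma appendReconfComm_cfg_zero : (ρ.appendReconfComm hρ hG hG').cfg 0 = ρ.cfg 0 := by
  simp [appendReconfComm]

@[simp]
lemma appendReconfComm_cfg_last : (ρ.appendReconfComm hρ hG hG').cfg (r + 2) = G' := by
  simp [appendReconfComm]

lemma endsInComm_appendReconfComm : (ρ.appendReconfComm hρ hG hG').EndsInComm := by
  simp [EndsInComm, appendReconfComm]

lemma KConstrained.appendReconfComm {k : ℕ} (hk : ρ.KConstrained k) (hd : dist (ρ.cfg r) G ≤ k) :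
    (ρ.appendReconfComm hρ hG hG').KConstrained k := by
  intro i hi hc
  obtain hi | rfl | rfl : i < r ∨ i = r ∨ i = r + 1 := by omega
  · simp only [Execution.appendReconfComm, hi, hi.le, Nat.succ_le_of_lt hi, if_true] at hc ⊢
    exact hk i hi hc
  · simpa [Execution.appendReconfComm] using hd
  · simp [Execution.appendReconfComm] at hc

end appendReconfComm

end Execution

lemma exists_kConstrained_execution_same_last_label [Finite V] (ρ : Execution V P r) :
    ∃ (m : ℕ) (ρ' : Execution V P m), ρ'.cfg 0 = ρ.cfg 0 ∧ ρ'.KConstrained (Nat.card V) ∧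
      ρ'.EndsInComm ∧ (ρ'.cfg m).label = (ρ.cfg r).label := by
  induction r with
  | zero => exact ⟨0, ρ, rfl, fun _ hi => absurd hi (by omega), fun h => absurd h (by omega), rfl⟩
  | succ n ih =>
    obtain ⟨m, ρ', h0, hk, hend, hlab⟩ := ih (ρ.truncate n.le_succ)
    cases hty : ρ.ty n with
    | reconf => exact ⟨m, ρ', h0, hk, hend, hlab.trans (ρ.step_reconf n n.lt_succ_self hty).symm⟩
    | comm =>
      obtain ⟨v, hv⟩ := (ρ.step_comm n n.lt_succ_self hty).exists_forall_neighborSet_eq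
      let H := rewire (ρ'.cfg m).graph (ρ.cfg n).graph v
      have hH : H.neighborSet v = (ρ.cfg n).graph.neighborSet v :=
        Set.ext (rewire_adj_left _ _ v)
      have hG : ReconfStep (ρ'.cfg m) ⟨H, (ρ.cfg n).label⟩ := hlab.symm
      exact ⟨m + 2, ρ'.appendReconfComm hend hG (hv H hH), by simpa using h0,
        hk.appendReconfComm (dist_rewire_le _ _ _ _), Execution.endsInComm_appendReconfComm,
        by simp⟩

theorem exists_idConstrained_execution_same_counts_general {Q M V : Type}
    [Fintype V] (P : BroadcastProtocol Q M) {n : ℕ} (ρ : Execution V P n) :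
    ∃ (m : ℕ) (ρ' : Execution V P m),
      ρ'.cfg 0 = ρ.cfg 0 ∧
      (∀ i < m, ρ'.ty i = StepType.reconf →
        dist (ρ'.cfg i) (ρ'.cfg (i + 1)) ≤ Fintype.card V) ∧
      (1 ≤ m → ρ'.ty (m - 1) = StepType.comm) ∧
      (∀ q : Q, {v | (ρ'.cfg m).label v = q}.ncard = {v | (ρ.cfg n).label v = q}.ncard) := by
  obtain ⟨m, ρ', h0, hk, hend, hlab⟩ := exists_kConstrained_execution_same_last_label ρ
  rw [Nat.card_eq_fintype_card] at hk
  exact ⟨m, ρ', h0, hk, hend, fun q => by rw [hlab]⟩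

/-- From any execution `ρ = (G_i)_{0 ≤ i ≤ n}` starting in a
configuration `G_0` with `N₀` nodes, one can build an execution `ρ'` from the same
configuration `G_0`, whose reconfiguration steps each change at most `N₀` edges,
whose last step (if any) is a communication step, and whose last configuration has,
for every state `q`, the same number of nodes labelled `q` as `G_n`. -/
theorem exists_idConstrained_execution_same_counts {Q M V : Type} [Finite Q] [Finite M]
    [Fintype V] (P : BroadcastProtocol Q M) {n : ℕ} (ρ : Execution V P n) :
    ∃ (m : ℕ) (ρ' : Execution V P m),
      ρ'.cfg 0 = ρ.cfg 0 ∧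
      (∀ i < m, ρ'.ty i = StepType.reconf →
        dist (ρ'.cfg i) (ρ'.cfg (i + 1)) ≤ Fintype.card V) ∧
      (1 ≤ m → ρ'.ty (m - 1) = StepType.comm) ∧
      (∀ q : Q, {v | (ρ'.cfg m).label v = q}.ncard = {v | (ρ.cfg n).label v = q}.ncard) :=
  exists_idConstrained_execution_same_counts_general P ρ

end RBN
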